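/- For any propositional modal theory T in the language ℒ_□: GL ⊆ PL(T) (every theorem of GL has a true T-provability interpretation) if and only if T contains all theorems of GL and is closed under modus ponens and necessitation. Moreover, for every theory T, GL ≠ PL(T): if T ⊢ ⊥ then □⊥ ∈ PL(T) \ GL, and if T ⊬ ⊥ then ¬□⊥ ∈ PL(T) \ GL. -/

import Mathlib

/-- Formulas of the modal language with atoms, ⊥, → and □. -/
inductive Fml : Type
  | atom : ℕ → Fml
  | bot  : Fml
  | imp  : Fml → Fml → Fml
  | box  : Fml → Fml
deriving DecidableEq

/-- Classical Boolean evaluation where boxed formulas behave like atoms: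
the valuation `v` is queried on atoms and on boxed formulas. -/
def evalCL (v : Fml → Bool) : Fml → Bool
  | .atom n => v (.atom n)
  | .bot => false
  | .imp A B => !(evalCL v A) || evalCL v B
  | .box A => v (.box A)

/-- Classical tautology over the modal language (□-formulas act as atoms). -/
def Taut (A : Fml) : Prop := ∀ v, evalCL v A = true

/-- A formula is purely modal if every atom is in the scope of some □. -/
def PurelyModal : Fml → Prop
  | .atom _ => False
  | .bot => True
  | .imp A B => PurelyModal A ∧ PurelyModal B
  | .box _ => True

/-- The provability logic GL. -/
inductive GLprf : Fml → Prop
  | taut {A} : Taut A → GLprf A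
  | k (A B : Fml) : GLprf (.imp (.box (.imp A B)) (.imp (.box A) (.box B)))
  | four (A : Fml) : GLprf (.imp (.box A) (.box (.box A)))
  | lob (A : Fml) : GLprf (.imp (.box (.imp (.box A) A)) (.box A))
  | mp {A B} : GLprf (.imp A B) → GLprf A → GLprf B
  | nec {A} : GLprf A → GLprf (.box A)

/-- Evaluation underlying the `T`-provability interpretation: atoms get
Boolean values from `v`, and `□A` is interpreted as `T ⊢ A`, i.e. `A ∈ T`
(where the theory `T` is identified with its set of theorems). -/
def evalT (v : ℕ → Bool) (T : Set Fml) : Fml → Prop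
  | .atom n => v n = true
  | .bot => False
  | .imp A B => evalT v T A → evalT v T B
  | .box A => A ∈ T

/-- The `T`-provability interpretation `A^T` is true: equivalently (via the
conjunctive normal form of `A` into phrases), `A` evaluates to true for every
Boolean valuation of the atoms when `□E` is read as `T ⊢ E`. -/
def PLint (T : Set Fml) (A : Fml) : Prop := ∀ v : ℕ → Bool, evalT v T A

/-- `PL(T)`, the provability logic of the theory `T`. -/
def PL (T : Set Fml) : Set Fml := {A | PLint T A}


section Aux
open Classical

/-- Kripke semantics on the frame (ℕ, <). -/
def sem (v : ℕ → ℕ → Bool) : ℕ → Fml → Prop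
  | n, .atom k => v n k = true
  | _, .bot => False
  | n, .imp A B => sem v n A → sem v n B
  | n, .box A => ∀ m, m < n → sem v m A

lemma sem_taut (v : ℕ → ℕ → Bool) (n : ℕ) {A : Fml} (h : Taut A) :
    sem v n A := by
  classical
  let u : Fml → Bool := fun F => decide (sem v n F)
  have key : ∀ B, sem v n B ↔ evalCL u B = true := by
    intro B
    induction B with
    | atom k => simp only [sem, evalCL, u]; exact ⟨fun h => @decide_eq_true _ (Classical.propDecidable _) h, fun h => @of_decide_eq_true _ (Classical.propDecidable _) h⟩
    | bot => simp [sem, evalCL]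
    | imp A B ihA ihB =>
        simp only [sem, evalCL, ihA, ihB]
        cases evalCL u A <;> cases evalCL u B <;> simp
    | box A _ => simp only [sem, evalCL, u]; exact ⟨fun h => @decide_eq_true _ (Classical.propDecidable _) h, fun h => @of_decide_eq_true _ (Classical.propDecidable _) h⟩
  exact (key A).mpr (h u)

lemma sem_sound (v : ℕ → ℕ → Bool) {A : Fml} (h : GLprf A) :
    ∀ n, sem v n A := by
  induction h with
  | taut ht => exact fun n => sem_taut v n ht
  | k A B =>
      intro n h1 h2 m hm
      exact h1 m hm (h2 m hm)
  | four A =>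
      intro n h m hm k hk
      exact h k (hk.trans hm)
  | lob A =>
      intro n h m
      induction m using Nat.strong_induction_on with
      | _ m ih =>
        intro hm
        exact h m hm (fun k hk => ih k hk (hk.trans hm))
  | mp _ _ ih1 ih2 => exact fun n => ih1 n (ih2 n)
  | nec _ ih => exact fun n m hm => ih m

lemma not_GL_box_bot : ¬ GLprf (.box .bot) := by
  intro h
  exact sem_sound (fun _ _ => true) h 1 0 (by norm_num)

lemma evalCL_boxtrue_sound {A : Fml} (h : GLprf A) :
    evalCL (fun _ => true) A = true := by
  induction h with
  | taut ht => exact ht _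
  | k A B => simp [evalCL]
  | four A => simp [evalCL]
  | lob A => simp [evalCL]
  | mp _ _ ih1 ih2 => simp [evalCL, ih2] at ih1; exact ih1
  | nec _ _ => simp [evalCL]

lemma not_GL_not_box_bot : ¬ GLprf (.imp (.box .bot) .bot) := by
  intro h
  simpa [evalCL] using evalCL_boxtrue_sound h

lemma evalT_taut (T : Set Fml) (v : ℕ → Bool) {A : Fml} (h : Taut A) :
    evalT v T A := by
  classical
  let u : Fml → Bool := fun F => decide (evalT v T F)
  have key : ∀ B, evalT v T B ↔ evalCL u B = true := by
    intro B
    induction B with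
    | atom k => simp only [evalT, evalCL, u]; exact ⟨fun h => @decide_eq_true _ (Classical.propDecidable _) h, fun h => @of_decide_eq_true _ (Classical.propDecidable _) h⟩
    | bot => simp [evalT, evalCL]
    | imp A B ihA ihB =>
        simp only [evalT, evalCL, ihA, ihB]
        cases evalCL u A <;> cases evalCL u B <;> simp
    | box A _ => simp only [evalT, evalCL, u]; exact ⟨fun h => @decide_eq_true _ (Classical.propDecidable _) h, fun h => @of_decide_eq_true _ (Classical.propDecidable _) h⟩
  exact (key A).mpr (h u)

end Aux


/-- GL ⊆ PL(T) iff `T` contains all theorems of GL and is closed under modus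
ponens and necessitation; moreover GL ≠ PL(T) for every theory `T`: if
`T ⊢ ⊥` then `□⊥ ∈ PL(T) \ GL`, and if `T ⊬ ⊥` then `¬□⊥ ∈ PL(T) \ GL`. -/


theorem GL_provability_interpretation (T : Set Fml) :
    ({A | GLprf A} ⊆ PL T ↔
      ((∀ A, GLprf A → A ∈ T) ∧
       (∀ A B, Fml.imp A B ∈ T → A ∈ T → B ∈ T) ∧
       (∀ A, A ∈ T → Fml.box A ∈ T))) ∧
    PL T ≠ {A | GLprf A} ∧
    (Fml.bot ∈ T → Fml.box .bot ∈ PL T ∧ ¬ GLprf (.box .bot)) ∧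
    (Fml.bot ∉ T →
      Fml.imp (.box .bot) .bot ∈ PL T ∧ ¬ GLprf (.imp (.box .bot) .bot)) := by
  constructor
  · constructor
    · intro hsub
      refine ⟨fun A hA => ?_, fun A B hAB hA => ?_, fun A hA => ?_⟩
      · exact hsub (GLprf.nec hA) (fun _ => true)
      · exact hsub (GLprf.k A B) (fun _ => true) hAB hA
      · exact hsub (GLprf.four A) (fun _ => true) hA
    · rintro ⟨hGL, hmp, hnec⟩ A hA v
      induction hA with
      | taut ht => exact evalT_taut T v ht
      | k A B => exact fun h1 h2 => hmp A B h1 h2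
      | four A => exact fun h => hnec A h
      | lob A =>
          intro h
          have h1 : Fml.box (.imp (.box A) A) ∈ T := hnec _ h
          have h2 : Fml.box A ∈ T :=
            hmp _ _ (hGL _ (GLprf.lob A)) h1
          exact hmp _ _ h h2
      | mp _ _ ih1 ih2 => exact ih1 ih2
      | nec hA _ => exact hGL _ hA
  refine ⟨?_, fun hb => ⟨fun v => hb, not_GL_box_bot⟩,
    fun hb => ⟨fun v h => hb h, not_GL_not_box_bot⟩⟩
  intro heq
  by_cases hb : Fml.bot ∈ T
  · have : Fml.box .bot ∈ PL T := fun v => hb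
    rw [heq] at this
    exact not_GL_box_bot this
  · have : Fml.imp (.box .bot) .bot ∈ PL T := fun v h => hb h
    rw [heq] at this
    exact not_GL_not_box_bot this
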